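/- arXiv:2502.19943 — 2 statements merged into one kernel-verified Lean document; each statement's English description precedes it below -/
import Mathlib

section
/- Fix integers m ≥ 2, 0 ≤ i ≤ m, and a position t with 1 ≤ t < m. For any N with 0 ≤ N ≤ binom(m,i), let S_N be the set consisting of the N largest binary strings of length m and Hamming weight i, where strings are compared by their decimal values ∑_{j=1}^{m} x_j·2^(m−j). Then the number of elements of S_N with a 1 at position t is greater than or equal to the number of elements of S_N with a 1 at position t+1. (Equivalently: in the code built from the first N rows of the decreasing-order constant-weight enumeration, the column weights Δ_t(1) are non-increasing in t.) -/
/-- Hamming weight of a binary string: the number of coordinates equal to 1. -/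
def hWt {m : ℕ} (x : Fin m → Bool) : ℕ :=
  (Finset.univ.filter fun j : Fin m => x j = true).card

/-- Decimal value of a binary string `(x_1, …, x_m)`: `∑_{j=1}^m x_j·2^(m-j)`
(position `j` is represented 0-based below, so the exponent is `m - 1 - j`). -/
def decVal {m : ℕ} (x : Fin m → Bool) : ℕ :=
  ∑ j : Fin m, (if x j then 2 ^ (m - 1 - (j : ℕ)) else 0)

/-- Fix `m ≥ 2`, `0 ≤ i ≤ m`, and a (1-based) position `t` with `1 ≤ t < m`.
For `0 ≤ N ≤ binom(m,i)`, let `S` be the set of the `N` largest binary strings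
of length `m` and Hamming weight `i`, compared by decimal value (characterized
below: `S` has `N` elements, all of weight `i`, and every weight-`i` string not
in `S` has smaller decimal value than every element of `S`).  Then the number
of elements of `S` with a `1` at position `t` is at least the number of
elements of `S` with a `1` at position `t+1`.  (1-based positions `t` and
`t+1` are the 0-based coordinates `t-1` and `t`.) -/
theorem stmt10 (m i : ℕ) (hm : 2 ≤ m) (him : i ≤ m)
    (t : ℕ) (ht1 : 1 ≤ t) (htm : t < m)
    (N : ℕ) (hN : N ≤ Nat.choose m i)
    (S : Finset (Fin m → Bool))
    (hSw : ∀ x ∈ S, hWt x = i)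
    (hcard : S.card = N)
    (hLargest : ∀ x ∈ S, ∀ y : Fin m → Bool, hWt y = i → y ∉ S → decVal y < decVal x) :
    (S.filter fun x => x ⟨t, htm⟩ = true).card ≤
      (S.filter fun x => x ⟨t - 1, by omega⟩ = true).card := by
  classical
  set a : Fin m := ⟨t - 1, by omega⟩ with ha
  set b : Fin m := ⟨t, htm⟩ with hb
  have hab : a ≠ b := by
    simp only [ha, hb, ne_eq, Fin.mk.injEq]
    omega
  have hba : b ≠ a := hab.symm
  set e := Equiv.swap a b with he
  have hwt_swap : ∀ x : Fin m → Bool, hWt (x ∘ e) = hWt x := by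
    intro x
    unfold hWt
    rw [Finset.card_filter, Finset.card_filter]
    exact Fintype.sum_equiv e _ _ (fun j => rfl)
  have hsum : ∀ z : Fin m → Bool, decVal z =
      (if z a then 2 ^ (m - 1 - (a : ℕ)) else 0) +
        ((if z b then 2 ^ (m - 1 - (b : ℕ)) else 0) +
          ∑ j ∈ (Finset.univ.erase a).erase b,
            (if z j then 2 ^ (m - 1 - (j : ℕ)) else 0)) := by
    intro z
    unfold decVal
    rw [← Finset.add_sum_erase _ _ (Finset.mem_univ a),
      ← Finset.add_sum_erase _ _ (Finset.mem_erase.mpr ⟨hba, Finset.mem_univ b⟩)]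
  -- the main comparison: swapping a 1 at b (with 0 at a) increases the value
  have hlt : ∀ x : Fin m → Bool, x a = false → x b = true →
      decVal x < decVal (x ∘ e) := by
    intro x hxa hxb
    rw [hsum x, hsum (x ∘ e)]
    have h1 : (x ∘ e) a = true := by simp [he, Equiv.swap_apply_left, hxb]
    have h2 : (x ∘ e) b = false := by simp [he, Equiv.swap_apply_right, hxa]
    have h3 : ∑ j ∈ (Finset.univ.erase a).erase b,
        (if (x ∘ e) j then 2 ^ (m - 1 - (j : ℕ)) else 0) =
        ∑ j ∈ (Finset.univ.erase a).erase b,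
        (if x j then 2 ^ (m - 1 - (j : ℕ)) else 0) := by
      apply Finset.sum_congr rfl
      intro j hj
      rw [Finset.mem_erase, Finset.mem_erase] at hj
      simp [he, Equiv.swap_apply_of_ne_of_ne hj.2.1 hj.1]
    rw [h1, h2, h3, hxa, hxb]
    rw [show (a : ℕ) = t - 1 from rfl, show (b : ℕ) = t from rfl]
    have hpow : 2 ^ (m - 1 - t) < 2 ^ (m - 1 - (t - 1)) := by
      apply Nat.pow_lt_pow_right one_lt_two
      omega
    simp only [if_true, Bool.false_eq_true, if_false]
    omega
  have hmem : ∀ x : Fin m → Bool, x ∈ S → x b = true → x a = false → x ∘ e ∈ S := by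
    intro x hxS hxb hxa
    by_contra hnot
    have := hLargest x hxS (x ∘ e) (by rw [hwt_swap]; exact hSw x hxS) hnot
    exact absurd this (not_lt.mpr (le_of_lt (hlt x hxa hxb)))
  apply Finset.card_le_card_of_injOn (fun x => if x a then x else x ∘ e)
  · intro x hx
    rw [Finset.mem_coe, Finset.mem_filter] at hx ⊢
    obtain ⟨hxS, hxb⟩ := hx
    by_cases hxa : x a = true
    · simp [hxa, hxS]
    · simp only [Bool.not_eq_true] at hxa
      refine ⟨?_, ?_⟩
      · simp only [hxa, Bool.false_eq_true, if_false]
        exact hmem x hxS hxb hxa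
      · simp [hxa, he, Equiv.swap_apply_left, hxb]
  · intro x hx y hy hfxy
    simp only [Finset.coe_filter, Set.mem_setOf_eq] at hx hy
    simp only at hfxy
    by_cases hxa : x a = true <;> by_cases hya : y a = true
    · simpa [hxa, hya] using hfxy
    · exfalso
      simp only [hxa, hya, if_true, Bool.false_eq_true, if_false] at hfxy
      have := congrFun hfxy b
      simp only [Function.comp_apply, he, Equiv.swap_apply_right] at this
      rw [hx.2] at this
      simp only [Bool.not_eq_true] at hya
      rw [hya] at this
      simp at this
    · exfalso
      simp only [hxa, hya, if_true, Bool.false_eq_true, if_false] at hfxy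
      have := congrFun hfxy b
      simp only [Function.comp_apply, he, Equiv.swap_apply_right] at this
      rw [hy.2] at this
      simp only [Bool.not_eq_true] at hxa
      rw [hxa] at this
      simp at this
    · simp only [hxa, hya, Bool.false_eq_true, if_false] at hfxy
      funext j
      have := congrFun hfxy (e j)
      simpa [he, Equiv.swap_apply_self] using this
end

section
/- (Net ISI gain of the column swap is non-positive) Let k ≥ 2 be an integer and let t be an integer with 1 ≤ t ≤ ⌊k/2⌋. Let (p_l)_{l≥2} be real numbers with p_l ≥ 0 for all l, and let (Δ_j) be real numbers with 0 ≤ Δ_{k+t} ≤ 2^(k−1). Define A = 2^(k−1)·∑_{l=2}^{⌈k/2⌉+t+1} p_l, B = 2^(k−1)·∑_{l=t+2}^{k+t+1} p_l + ∑_{l=2}^{t+1} Δ_{k+t−l+2}·p_l, A' = Δ_{k+t}·p_2 + 2^(k−1)·∑_{l=3}^{⌈k/2⌉+t+1} p_l, and B' = Δ_{k+t}·p_{⌊k/2⌋+2} + 2^(k−1)·∑_{l=⌊k/2⌋+3}^{k+t+1} p_l + 2^(k−1)·p_2 + 2^(k−1)·∑_{l=t+2}^{⌊k/2⌋+1} p_l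 + ∑_{l=3}^{t+1} Δ_{k+t−l+2}·p_l (empty sums equal 0). Then (A' + B') − (A + B) = (Δ_{k+t} − 2^(k−1))·p_{⌊k/2⌋+2} ≤ 0. -/
lemma sum_Icc_bot (f : ℕ → ℝ) {a b : ℕ} (h : a ≤ b) :
    ∑ l ∈ Finset.Icc a b, f l = f a + ∑ l ∈ Finset.Icc (a + 1) b, f l := by
  rw [Finset.Icc_add_one_left_eq_Ioc, ← Finset.Ioc_insert_left h, Finset.sum_insert (by simp)]

/-- (Net ISI gain of the column swap is non-positive) Let `k ≥ 2`,
`1 ≤ t ≤ ⌊k/2⌋`, let `p_l ≥ 0` be reals and `Δ_j` reals with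
`0 ≤ Δ_{k+t} ≤ 2^(k-1)`.  With
`A  = 2^(k-1)·∑_{l=2}^{⌈k/2⌉+t+1} p_l`,
`B  = 2^(k-1)·∑_{l=t+2}^{k+t+1} p_l + ∑_{l=2}^{t+1} Δ_{k+t-l+2}·p_l`,
`A' = Δ_{k+t}·p_2 + 2^(k-1)·∑_{l=3}^{⌈k/2⌉+t+1} p_l`, and
`B' = Δ_{k+t}·p_{⌊k/2⌋+2} + 2^(k-1)·∑_{l=⌊k/2⌋+3}^{k+t+1} p_l + 2^(k-1)·p_2
      + 2^(k-1)·∑_{l=t+2}^{⌊k/2⌋+1} p_l + ∑_{l=3}^{t+1} Δ_{k+t-l+2}·p_l`,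
one has `(A' + B') − (A + B) = (Δ_{k+t} − 2^(k-1))·p_{⌊k/2⌋+2} ≤ 0`.
Here `⌈k/2⌉ = (k+1)/2` and `⌊k/2⌋ = k/2` in natural-number division, and
empty sums equal 0. -/
theorem stmt11 (k t : ℕ) (hk : 2 ≤ k) (ht1 : 1 ≤ t) (ht2 : t ≤ k / 2)
    (p : ℕ → ℝ) (hp : ∀ l, 0 ≤ p l)
    (Δ : ℕ → ℝ) (hΔ0 : 0 ≤ Δ (k + t)) (hΔ1 : Δ (k + t) ≤ 2 ^ (k - 1))
    (A B A' B' : ℝ)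
    (hA : A = 2 ^ (k - 1) * ∑ l ∈ Finset.Icc 2 ((k + 1) / 2 + t + 1), p l)
    (hB : B = 2 ^ (k - 1) * (∑ l ∈ Finset.Icc (t + 2) (k + t + 1), p l)
        + ∑ l ∈ Finset.Icc 2 (t + 1), Δ (k + t - l + 2) * p l)
    (hA' : A' = Δ (k + t) * p 2
        + 2 ^ (k - 1) * ∑ l ∈ Finset.Icc 3 ((k + 1) / 2 + t + 1), p l)
    (hB' : B' = Δ (k + t) * p (k / 2 + 2)
        + 2 ^ (k - 1) * (∑ l ∈ Finset.Icc (k / 2 + 3) (k + t + 1), p l)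
        + 2 ^ (k - 1) * p 2
        + 2 ^ (k - 1) * (∑ l ∈ Finset.Icc (t + 2) (k / 2 + 1), p l)
        + ∑ l ∈ Finset.Icc 3 (t + 1), Δ (k + t - l + 2) * p l) :
    (A' + B') - (A + B) = (Δ (k + t) - 2 ^ (k - 1)) * p (k / 2 + 2) ∧
    (A' + B') - (A + B) ≤ 0 := by
  have hd : k / 2 ≤ k := Nat.div_le_self k 2
  have e1 : ∑ l ∈ Finset.Icc 2 ((k + 1) / 2 + t + 1), p l
      = p 2 + ∑ l ∈ Finset.Icc 3 ((k + 1) / 2 + t + 1), p l :=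
    sum_Icc_bot p (by omega)
  have e2 : ∑ l ∈ Finset.Icc 2 (t + 1), Δ (k + t - l + 2) * p l
      = Δ (k + t) * p 2 + ∑ l ∈ Finset.Icc 3 (t + 1), Δ (k + t - l + 2) * p l := by
    rw [sum_Icc_bot (fun l => Δ (k + t - l + 2) * p l) (by omega : 2 ≤ t + 1)]
    norm_num [show k + t - 2 + 2 = k + t by omega]
  have e3 : ∑ l ∈ Finset.Icc (t + 2) (k + t + 1), p l
      = (∑ l ∈ Finset.Icc (t + 2) (k / 2 + 1), p l)
        + (p (k / 2 + 2) + ∑ l ∈ Finset.Icc (k / 2 + 3) (k + t + 1), p l) := by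
    have hsplit : Finset.Icc (t + 2) (k + t + 1)
        = Finset.Icc (t + 2) (k / 2 + 1) ∪ Finset.Icc (k / 2 + 2) (k + t + 1) := by
      ext x; simp only [Finset.mem_Icc, Finset.mem_union]; omega
    rw [hsplit, Finset.sum_union (by
        rw [Finset.disjoint_left]; intro x hx hy
        simp only [Finset.mem_Icc] at hx hy; omega),
      sum_Icc_bot p (by omega : k / 2 + 2 ≤ k + t + 1)]
  have heq : (A' + B') - (A + B) = (Δ (k + t) - 2 ^ (k - 1)) * p (k / 2 + 2) := by
    rw [hA, hB, hA', hB', e1, e2, e3]; ring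
  refine ⟨heq, heq ▸ ?_⟩
  have := hp (k / 2 + 2)
  nlinarith
end
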